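/- arXiv:2004.08818 — 8 statements merged into one kernel-verified Lean document; each statement's English description precedes it below -/
import Mathlib

section
/- Let G be a graph, let P = (v_1, ..., v_n) be an induced path in G where n ≥ 4 is even, and let y be a vertex not on P that is adjacent to both endpoints v_1 and v_n of P and sees (i.e., is adjacent to both endpoints of) an even number of edges of P. Then the induced subgraph G[V(P) ∪ {y}] contains an odd hole (an induced cycle of odd length at least 5). -/
open Finset
open scoped Classical

/-- `v : Fin n → V` is an induced path in `G`: vertices are distinct and
adjacency holds exactly between consecutive vertices. -/
def IsInducedPathOn {V : Type*} (G : SimpleGraph V) {n : ℕ} (v : Fin n → V) : Prop :=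
  Function.Injective v ∧
    ∀ i j : Fin n, G.Adj (v i) (v j) ↔ (i.val + 1 = j.val ∨ j.val + 1 = i.val)

/-- `f : Fin m → V` is an induced cycle in `G` (adjacency exactly between
cyclically consecutive vertices). -/
def IsInducedCycleOn {V : Type*} (G : SimpleGraph V) {m : ℕ} (f : Fin m → V) : Prop :=
  Function.Injective f ∧
    ∀ i j : Fin m, G.Adj (f i) (f j) ↔
      ((i.val + 1) % m = j.val ∨ (j.val + 1) % m = i.val)

/-- The induced subgraph of `G` on the set `S` contains an odd hole:
an induced cycle of odd length at least 5, all of whose vertices lie in `S`. -/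
def HasOddHoleOn {V : Type*} (G : SimpleGraph V) (S : Set V) : Prop :=
  ∃ m : ℕ, 5 ≤ m ∧ Odd m ∧ ∃ f : Fin m → V, (∀ i, f i ∈ S) ∧ IsInducedCycleOn G f

lemma gap_key (N : ℕ → Prop) [DecidablePred N] : ∀ d i j : ℕ, j - i = d → i ≤ j → N i → N j →
    (∃ a b, i ≤ a ∧ a < b ∧ b ≤ j ∧ N a ∧ N b ∧ (∀ c, a < c → c < b → ¬ N c) ∧
      Odd (b - a) ∧ 3 ≤ b - a) ∨
    ((Finset.Ico i j).filter (fun t => N t ∧ N (t + 1))).card % 2 = (j - i) % 2 := by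
  intro d
  induction d using Nat.strong_induction_on with
  | _ d ih =>
    intro i j hd hij hNi hNj
    rcases eq_or_lt_of_le hij with rfl | hlt
    · right; simp
    by_cases hk : ∃ k, i < k ∧ k < j ∧ N k
    · obtain ⟨k, hik, hkj, hNk⟩ := hk
      have h1 := ih (k - i) (by omega) i k rfl (by omega) hNi hNk
      have h2 := ih (j - k) (by omega) k j rfl (by omega) hNk hNj
      rcases h1 with ⟨a, b, ha1, hab, hbk, hNa, hNb, hbet, ho, h3⟩ | h1
      · exact Or.inl ⟨a, b, ha1, hab, le_trans hbk (le_of_lt hkj), hNa, hNb, hbet, ho, h3⟩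
      rcases h2 with ⟨a, b, ha1, hab, hbk, hNa, hNb, hbet, ho, h3⟩ | h2
      · exact Or.inl ⟨a, b, le_trans (le_of_lt hik) ha1, hab, hbk, hNa, hNb, hbet, ho, h3⟩
      right
      have hunion : Finset.Ico i j = Finset.Ico i k ∪ Finset.Ico k j :=
        (Finset.Ico_union_Ico_eq_Ico (le_of_lt hik) (le_of_lt hkj)).symm
      rw [hunion, Finset.filter_union, Finset.card_union_of_disjoint
        (Finset.disjoint_filter_filter (Finset.Ico_disjoint_Ico_consecutive i k j))]
      omega
    · push_neg at hk
      by_cases hodd : Odd (j - i) ∧ 3 ≤ j - i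
      · exact Or.inl ⟨i, j, le_refl i, hlt, le_refl j, hNi, hNj,
          fun c h1 h2 hc => hk c h1 h2 hc, hodd.1, hodd.2⟩
      right
      rcases Nat.lt_or_ge (i + 1) j with h2 | h2
      · have heven : (j - i) % 2 = 0 := by
          rcases Nat.even_or_odd (j - i) with he | ho
          · exact Nat.even_iff.mp he
          · exact absurd ⟨ho, by have := Nat.odd_iff.mp ho; omega⟩ hodd
        have hemp : (Finset.Ico i j).filter (fun t => N t ∧ N (t + 1)) = ∅ := by
          rw [Finset.filter_eq_empty_iff]
          intro t ht
          simp only [Finset.mem_Ico] at ht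
          rintro ⟨hNt, hNt1⟩
          have hti : t = i := by
            by_contra h
            exact hk t (by omega) ht.2 hNt
          exact hk (t + 1) (by omega) (by omega) hNt1
        rw [hemp]
        simpa using heven.symm
      · have hj : j = i + 1 := by omega
        subst hj
        have hone : (Finset.Ico i (i + 1)).filter (fun t => N t ∧ N (t + 1)) = {i} := by
          rw [Nat.Ico_succ_singleton, Finset.filter_singleton, if_pos ⟨hNi, hNj⟩]
        rw [hone]
        simp

set_option maxHeartbeats 4000000 in
theorem stmt0 {V : Type*} (G : SimpleGraph V) {n : ℕ}
    (hn4 : 4 ≤ n) (hneven : Even n) (v : Fin n → V)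
    (hpath : IsInducedPathOn G v) (y : V) (hy : y ∉ Set.range v)
    (hy1 : G.Adj y (v ⟨0, by omega⟩)) (hy2 : G.Adj y (v ⟨n - 1, by omega⟩))
    (hsee : Even ((Finset.univ.filter (fun i : Fin (n - 1) =>
        G.Adj y (v ⟨i.val, by omega⟩) ∧ G.Adj y (v ⟨i.val + 1, by omega⟩))).card)) :
    HasOddHoleOn G (Set.range v ∪ {y}) := by
  classical
  obtain ⟨hinj, hadj⟩ := hpath
  have hkey := gap_key (fun t => ∃ h : t < n, G.Adj y (v ⟨t, h⟩)) (n - 1) 0 (n - 1) rfl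
    (by omega) ⟨by omega, hy1⟩ ⟨by omega, hy2⟩
  have hcount : ((Finset.Ico 0 (n - 1)).filter
      (fun t => (∃ h : t < n, G.Adj y (v ⟨t, h⟩)) ∧ (∃ h : t + 1 < n, G.Adj y (v ⟨t + 1, h⟩)))).card =
      (Finset.univ.filter (fun i : Fin (n - 1) =>
        G.Adj y (v ⟨i.val, by omega⟩) ∧ G.Adj y (v ⟨i.val + 1, by omega⟩))).card := by
    refine Finset.card_bij (fun t ht => ⟨t, (Finset.mem_Ico.mp (Finset.mem_filter.mp ht).1).2⟩)
      ?_ ?_ ?_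
    · intro t ht
      obtain ⟨⟨h1, ha1⟩, ⟨h2, ha2⟩⟩ := (Finset.mem_filter.mp ht).2
      simp only [Finset.mem_filter, Finset.mem_univ, true_and]
      exact ⟨ha1, ha2⟩
    · intro p hp q hq h
      simpa using congrArg Fin.val h
    · intro i hi
      obtain ⟨ha1, ha2⟩ := (Finset.mem_filter.mp hi).2
      refine ⟨i.val, ?_, rfl⟩
      simp only [Finset.mem_filter, Finset.mem_Ico]
      exact ⟨⟨Nat.zero_le _, i.isLt⟩, ⟨by omega, ha1⟩, ⟨by omega, ha2⟩⟩
  rcases hkey with ⟨a, b, ha0, hab, hbn1, ⟨han, hNa⟩, ⟨hbn, hNb⟩, hbetween, hodd, h3⟩ | hpar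
  · -- build the odd hole
    have hNiff : ∀ q (hq : q < n), a ≤ q → q ≤ b → (G.Adj y (v ⟨q, hq⟩) ↔ q = a ∨ q = b) := by
      intro q hq hq1 hq2
      constructor
      · intro h
        by_contra hc
        push_neg at hc
        exact hbetween q (by omega) (by omega) ⟨hq, h⟩
      · rintro (rfl | rfl)
        · exact hNa
        · exact hNb
    have hm5 : 5 ≤ b - a + 2 := by omega
    have hoddm : Odd (b - a + 2) := by
      obtain ⟨c, hc⟩ := hodd
      exact ⟨c + 1, by omega⟩
    refine ⟨b - a + 2, hm5, hoddm, fun i => if h : i.val = 0 then y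
      else v ⟨a + i.val - 1, by have := i.isLt; omega⟩, ?_, ?_, ?_⟩
    · intro i
      by_cases h : i.val = 0
      · simp [h]
      · simp only [dif_neg h]
        exact Or.inl ⟨_, rfl⟩
    · intro i j h
      dsimp only at h
      by_cases hi0 : i.val = 0 <;> by_cases hj0 : j.val = 0
      · exact Fin.ext (by omega)
      · rw [dif_pos hi0, dif_neg hj0] at h
        exact absurd ⟨_, h.symm⟩ hy
      · rw [dif_neg hi0, dif_pos hj0] at h
        exact absurd ⟨_, h⟩ hy
      · rw [dif_neg hi0, dif_neg hj0] at h
        have := congrArg Fin.val (hinj h)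
        simp only at this
        have hiv := i.isLt
        have hjv := j.isLt
        exact Fin.ext (by omega)
    · intro i j
      have hiv := i.isLt
      have hjv := j.isLt
      dsimp only
      by_cases hi0 : i.val = 0 <;> by_cases hj0 : j.val = 0
      · rw [dif_pos hi0, dif_pos hj0]
        simp only [hi0, hj0]
        constructor
        · intro h
          exact absurd h (G.irrefl)
        · rintro (h | h) <;> rw [Nat.mod_eq_of_lt (by omega)] at h <;> omega
      · rw [dif_pos hi0, dif_neg hj0]
        rw [hNiff (a + j.val - 1) (by omega) (by omega) (by omega)]
        simp only [hi0]
        rw [Nat.mod_eq_of_lt (show 1 < b - a + 2 by omega)]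
        constructor
        · rintro (h | h)
          · left; omega
          · right
            have : j.val + 1 = b - a + 2 := by omega
            rw [this, Nat.mod_self]
        · rintro (h | h)
          · left; omega
          · rcases Nat.lt_or_ge (j.val + 1) (b - a + 2) with h' | h'
            · rw [Nat.mod_eq_of_lt h'] at h; omega
            · right; omega
      · rw [dif_neg hi0, dif_pos hj0]
        rw [G.adj_comm]
        rw [hNiff (a + i.val - 1) (by omega) (by omega) (by omega)]
        simp only [hj0]
        rw [Nat.mod_eq_of_lt (show 0 + 1 < b - a + 2 by omega)]
        constructor
        · rintro (h | h)
          · right; omega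
          · left
            have : i.val + 1 = b - a + 2 := by omega
            rw [this, Nat.mod_self]
        · rintro (h | h)
          · rcases Nat.lt_or_ge (i.val + 1) (b - a + 2) with h' | h'
            · rw [Nat.mod_eq_of_lt h'] at h; omega
            · right; omega
          · left; omega
      · rw [dif_neg hi0, dif_neg hj0]
        rw [hadj]
        simp only
        have e1 : (i.val + 1) % (b - a + 2) = if i.val + 1 = b - a + 2 then 0 else i.val + 1 := by
          split
          · rw [‹i.val + 1 = b - a + 2›, Nat.mod_self]
          · exact Nat.mod_eq_of_lt (by omega)
        have e2 : (j.val + 1) % (b - a + 2) = if j.val + 1 = b - a + 2 then 0 else j.val + 1 := by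
          split
          · rw [‹j.val + 1 = b - a + 2›, Nat.mod_self]
          · exact Nat.mod_eq_of_lt (by omega)
        rw [e1, e2]
        split <;> split <;> omega
  · exfalso
    rw [hcount] at hpar
    have h1 : (n - 1) % 2 = 1 := by
      have := Nat.even_iff.mp hneven
      omega
    have h2 := Nat.even_iff.mp hsee
    omega
end

section
/- Let G be a graph, let P = (v_1, ..., v_n) be an induced path in G where n ≥ 3 is odd, and let y be a vertex not on P that is adjacent to both endpoints v_1 and v_n of P and is adjacent to an even number of vertices of P. Then the induced subgraph G[V(P) ∪ {y}] contains an even hole (an induced cycle of even length at least 4). -/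
open Finset
open scoped Classical

/-- The induced subgraph of `G` on `S` contains an even hole:
an induced cycle of even length at least 4 with all vertices in `S`. -/
def HasEvenHoleOn {V : Type*} (G : SimpleGraph V) (S : Set V) : Prop :=
  ∃ m : ℕ, 4 ≤ m ∧ Even m ∧ ∃ f : Fin m → V, (∀ i, f i ∈ S) ∧ IsInducedCycleOn G f

private lemma gapKey (S : Finset ℕ)
    (hodd : ∀ a ∈ S, ∀ b ∈ S, a < b → (∀ c ∈ S, c ≤ a ∨ b ≤ c) → (b - a) % 2 = 1) :
    ∀ d : ℕ, ∀ i ∈ S, ∀ j ∈ S, i ≤ j → j - i ≤ d →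
      (S.filter (fun x => i ≤ x ∧ x ≤ j)).card % 2 = (j - i + 1) % 2 := by
  have base : ∀ i ∈ S, (S.filter (fun x => i ≤ x ∧ x ≤ i)).card = 1 := by
    intro i hi
    have : S.filter (fun x => i ≤ x ∧ x ≤ i) = {i} := by
      ext x
      simp only [Finset.mem_filter, Finset.mem_singleton]
      constructor
      · rintro ⟨_, h1, h2⟩; omega
      · rintro rfl; exact ⟨hi, le_rfl, le_rfl⟩
    rw [this]; simp
  intro d
  induction d with
  | zero =>
    intro i hi j hj hij hd
    have hji : i = j := by omega
    subst hji
    rw [base i hi]; omega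
  | succ d ih =>
    intro i hi j hj hij hd
    rcases eq_or_lt_of_le hij with rfl | hlt
    · rw [base i hi]; omega
    · set T := S.filter (fun x => i < x ∧ x ≤ j) with hT
      have hjT : j ∈ T := by simp [hT, hj, hlt]
      have hTne : T.Nonempty := ⟨j, hjT⟩
      set k := T.min' hTne with hk
      have hkT : k ∈ T := Finset.min'_mem T hTne
      have hkS : k ∈ S := (Finset.mem_filter.mp hkT).1
      have hik : i < k := (Finset.mem_filter.mp hkT).2.1
      have hkj : k ≤ j := (Finset.mem_filter.mp hkT).2.2
      have hcons : ∀ c ∈ S, c ≤ i ∨ k ≤ c := by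
        intro c hc
        by_cases h1 : c ≤ i
        · exact Or.inl h1
        · right
          by_cases h2 : c ≤ j
          · exact Finset.min'_le T c (by simp [hT, hc]; omega)
          · omega
      have hko : (k - i) % 2 = 1 := hodd i hi k hkS hik hcons
      have hrec := ih k hkS j hj hkj (by omega)
      have hset : S.filter (fun x => i ≤ x ∧ x ≤ j)
          = insert i (S.filter (fun x => k ≤ x ∧ x ≤ j)) := by
        ext x
        simp only [Finset.mem_filter, Finset.mem_insert]
        constructor
        · rintro ⟨hx, h1, h2⟩
          rcases eq_or_lt_of_le h1 with rfl | h1'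
          · exact Or.inl rfl
          · right
            refine ⟨hx, ?_, h2⟩
            rcases hcons x hx with h | h
            · omega
            · exact h
        · rintro (rfl | ⟨hx, h1, h2⟩)
          · exact ⟨hi, le_rfl, le_of_lt hlt⟩
          · exact ⟨hx, by omega, h2⟩
      have hnotmem : i ∉ S.filter (fun x => k ≤ x ∧ x ≤ j) := by
        simp only [Finset.mem_filter]; omega
      rw [hset, Finset.card_insert_of_notMem hnotmem]
      omega

theorem stmt1 {V : Type*} (G : SimpleGraph V) {n : ℕ}
    (hn3 : 3 ≤ n) (hnodd : Odd n) (v : Fin n → V)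
    (hpath : IsInducedPathOn G v) (y : V) (hy : y ∉ Set.range v)
    (hy1 : G.Adj y (v ⟨0, by omega⟩)) (hy2 : G.Adj y (v ⟨n - 1, by omega⟩))
    (hsee : Even ((Finset.univ.filter (fun i : Fin n => G.Adj y (v i))).card)) :
    HasEvenHoleOn G (Set.range v ∪ {y}) := by
  obtain ⟨hinj, hadj⟩ := hpath
  set S : Finset ℕ := (Finset.univ.filter (fun i : Fin n => G.Adj y (v i))).image Fin.val
    with hSdef
  have hScard : S.card = (Finset.univ.filter (fun i : Fin n => G.Adj y (v i))).card :=
    Finset.card_image_of_injective _ Fin.val_injective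
  have hmemS : ∀ x : ℕ, ∀ hx : x < n, (x ∈ S ↔ G.Adj y (v ⟨x, hx⟩)) := by
    intro x hx
    constructor
    · intro h
      obtain ⟨i, hi, hival⟩ := Finset.mem_image.mp h
      have : i = ⟨x, hx⟩ := Fin.ext hival
      rw [← this]
      exact (Finset.mem_filter.mp hi).2
    · intro h
      exact Finset.mem_image.mpr ⟨⟨x, hx⟩, Finset.mem_filter.mpr ⟨Finset.mem_univ _, h⟩, rfl⟩
  have hSlt : ∀ x ∈ S, x < n := by
    intro x hx
    obtain ⟨i, _, hival⟩ := Finset.mem_image.mp hx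
    rw [← hival]; exact i.isLt
  have h0S : (0 : ℕ) ∈ S := (hmemS 0 (by omega)).mpr hy1
  have hn1S : n - 1 ∈ S := (hmemS (n - 1) (by omega)).mpr hy2
  -- find a consecutive pair with even gap
  have main : ∃ a ∈ S, ∃ b ∈ S, a < b ∧ (∀ c ∈ S, c ≤ a ∨ b ≤ c) ∧ (b - a) % 2 = 0 := by
    by_contra hcon
    push_neg at hcon
    have hodd : ∀ a ∈ S, ∀ b ∈ S, a < b → (∀ c ∈ S, c ≤ a ∨ b ≤ c) → (b - a) % 2 = 1 := by
      intro a ha b hb hab hc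
      have := hcon a ha b hb hab hc
      omega
    have hkey := gapKey S hodd n 0 h0S (n - 1) hn1S (by omega) (by omega)
    have hfull : S.filter (fun x => 0 ≤ x ∧ x ≤ n - 1) = S := by
      ext x
      simp only [Finset.mem_filter]
      constructor
      · exact fun h => h.1
      · intro h
        have := hSlt x h
        exact ⟨h, by omega, by omega⟩
    rw [hfull] at hkey
    have h1 : n % 2 = 1 := Nat.odd_iff.mp hnodd
    have h2 : S.card % 2 = 0 := Nat.even_iff.mp (hScard ▸ hsee)
    omega
  obtain ⟨a, haS, b, hbS, hab, hbetween, hgap⟩ := main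
  have hbn : b < n := hSlt b hbS
  set d := b - a with hd
  have hd2 : 2 ≤ d := by omega
  set m := d + 2 with hm
  refine ⟨m, by omega, Nat.even_iff.mpr (by omega), ?_⟩
  set f : Fin m → V := fun k => if h : k.val ≤ d then v ⟨a + k.val, by omega⟩ else y
    with hf
  have hfval : ∀ k : Fin m, ∀ hk : k.val ≤ d, f k = v ⟨a + k.val, by omega⟩ := by
    intro k hk; simp [hf, hk]
  have hfy : ∀ k : Fin m, ¬ (k.val ≤ d) → f k = y := by
    intro k hk; simp [hf, hk]
  refine ⟨f, fun i => ?_, ?_, ?_⟩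
  · by_cases h : i.val ≤ d
    · rw [hfval i h]; exact Or.inl ⟨_, rfl⟩
    · rw [hfy i h]; exact Or.inr rfl
  · -- injective
    intro i j hij
    by_cases hi : i.val ≤ d <;> by_cases hj : j.val ≤ d
    · rw [hfval i hi, hfval j hj] at hij
      have := hinj hij
      have : a + i.val = a + j.val := congrArg Fin.val this
      exact Fin.ext (by omega)
    · rw [hfval i hi, hfy j hj] at hij
      exact absurd ⟨_, hij⟩ hy
    · rw [hfy i hi, hfval j hj] at hij
      exact absurd ⟨_, hij.symm⟩ hy
    · have := i.isLt
      have := j.isLt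
      exact Fin.ext (by omega)
  · -- adjacency
    intro i j
    have him := i.isLt
    have hjm := j.isLt
    by_cases hi : i.val ≤ d <;> by_cases hj : j.val ≤ d
    · rw [hfval i hi, hfval j hj, hadj]
      have h1 : (i.val + 1) % m = i.val + 1 := Nat.mod_eq_of_lt (by omega)
      have h2 : (j.val + 1) % m = j.val + 1 := Nat.mod_eq_of_lt (by omega)
      rw [h1, h2]
      simp only
      omega
    · -- j = y
      have hjv : j.val = d + 1 := by omega
      rw [hfval i hi, hfy j hj]
      have hSiff : a + i.val ∈ S ↔ (i.val = 0 ∨ i.val = d) := by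
        constructor
        · intro h
          rcases hbetween _ h with h' | h' <;> omega
        · rintro (h | h)
          · rw [h]; simpa using haS
          · rw [h]
            have : a + d = b := by omega
            rw [this]; exact hbS
      rw [G.adj_comm, ← hmemS (a + i.val) (by omega), hSiff]
      have h1 : (i.val + 1) % m = i.val + 1 := Nat.mod_eq_of_lt (by omega)
      have h2 : (j.val + 1) % m = 0 := by
        have : j.val + 1 = m := by omega
        rw [this, Nat.mod_self]
      rw [h1, h2]
      omega
    · -- i = y
      have hiv : i.val = d + 1 := by omega
      rw [hfy i hi, hfval j hj]
      have hSiff : a + j.val ∈ S ↔ (j.val = 0 ∨ j.val = d) := by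
        constructor
        · intro h
          rcases hbetween _ h with h' | h' <;> omega
        · rintro (h | h)
          · rw [h]; simpa using haS
          · rw [h]
            have : a + d = b := by omega
            rw [this]; exact hbS
      rw [← hmemS (a + j.val) (by omega), hSiff]
      have h1 : (i.val + 1) % m = 0 := by
        have : i.val + 1 = m := by omega
        rw [this, Nat.mod_self]
      have h2 : (j.val + 1) % m = j.val + 1 := Nat.mod_eq_of_lt (by omega)
      rw [h1, h2]
      omega
    · rw [hfy i hi, hfy j hj]
      have hiv : i.val = d + 1 := by omega
      have hjv : j.val = d + 1 := by omega
      have h1 : (i.val + 1) % m = 0 := by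
        have : i.val + 1 = m := by omega
        rw [this, Nat.mod_self]
      have h2 : (j.val + 1) % m = 0 := by
        have : j.val + 1 = m := by omega
        rw [this, Nat.mod_self]
      rw [h1, h2]
      constructor
      · intro h; exact absurd rfl (G.ne_of_adj h)
      · intro h; omega
end

section
/- Let n = 2^i - 1 and q = 2^{i-1} - 1 for some i ≥ 1, and let Q, R be disjoint subsets of [n] with |Q| + |R| ≤ q. Then the number of q-element subsets Y of [n] with R ⊆ Y and Q ∩ Y = ∅, which equals C(n - |R| - |Q|, q - |R|), is odd if and only if Q is empty. -/
open Finset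

private lemma choose_mod_two_even (n : ℕ) : ∀ b m : ℕ, b < 2 ^ n → m < 2 ^ n →
    2 ^ n ≤ b + m → ((b + m).choose b) % 2 = 0 := by
  induction n with
  | zero => intro b m hb hm h; omega
  | succ n ih =>
    intro b m hb hm h
    have hp : (2 : ℕ) ^ (n + 1) = 2 * 2 ^ n := by ring
    have lucas := @Choose.choose_modEq_choose_mod_mul_choose_div_nat (b + m) b 2 ⟨Nat.prime_two⟩
    rw [Nat.ModEq] at lucas
    by_cases h1 : b % 2 = 1 ∧ m % 2 = 1
    · have h2 : (b + m) % 2 = 0 := by omega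
      rw [lucas, h2, h1.1]
      simp
    · have hbm : (b + m) % 2 = b % 2 + m % 2 := by omega
      have h3 : (b + m) / 2 = b / 2 + m / 2 := by omega
      have hbit : Nat.choose ((b + m) % 2) (b % 2) = 1 := by
        rcases Nat.mod_two_eq_zero_or_one b with hb2 | hb2 <;>
          rcases Nat.mod_two_eq_zero_or_one m with hm2 | hm2 <;>
          simp [hbm, hb2, hm2] <;> omega
      have ih' := ih (b / 2) (m / 2) (by omega) (by omega) (by omega)
      rw [lucas, Nat.mul_mod, hbit, h3, ih']
  
private lemma choose_mod_two_odd (n : ℕ) : ∀ b : ℕ, b < 2 ^ n →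
    ((2 ^ n + b).choose b) % 2 = 1 := by
  induction n with
  | zero => intro b hb; interval_cases b; simp
  | succ n ih =>
    intro b hb
    have hp : (2 : ℕ) ^ (n + 1) = 2 * 2 ^ n := by ring
    have lucas := @Choose.choose_modEq_choose_mod_mul_choose_div_nat (2 ^ (n + 1) + b) b 2
      ⟨Nat.prime_two⟩
    rw [Nat.ModEq] at lucas
    have h2 : (2 ^ (n + 1) + b) % 2 = b % 2 := by omega
    have h3 : (2 ^ (n + 1) + b) / 2 = 2 ^ n + b / 2 := by omega
    have ih' := ih (b / 2) (by omega)
    rw [lucas, h2, Nat.choose_self, h3, Nat.mul_mod, ih']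

theorem stmt3 (i : ℕ) (hi : 1 ≤ i) (n q : ℕ)
    (hn : n = 2 ^ i - 1) (hq : q = 2 ^ (i - 1) - 1)
    (Q R : Finset (Fin n)) (hdisj : Disjoint Q R) (hcard : Q.card + R.card ≤ q) :
    ((Finset.univ.powersetCard q).filter (fun Y => R ⊆ Y ∧ Disjoint Q Y)).card
        = Nat.choose (n - R.card - Q.card) (q - R.card) ∧
    (Odd (((Finset.univ.powersetCard q).filter
        (fun Y => R ⊆ Y ∧ Disjoint Q Y)).card) ↔ Q = ∅) := by
  have hp2 : (2 : ℕ) ^ i = 2 * 2 ^ (i - 1) := by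
    rw [← pow_succ']
    congr 1
    omega
  have hppos : 1 ≤ (2 : ℕ) ^ (i - 1) := Nat.one_le_two_pow
  have hRq : R.card ≤ q := by omega
  -- counting part
  have key : ((Finset.univ.powersetCard q).filter (fun Y => R ⊆ Y ∧ Disjoint Q Y)).card
      = ((Finset.univ \ (Q ∪ R)).powersetCard (q - R.card)).card := by
    apply Finset.card_bij' (fun Y _ => Y \ R) (fun Z _ => Z ∪ R)
    · intro Y hY
      simp only [mem_filter, Finset.mem_powersetCard] at hY
      obtain ⟨⟨-, hYcard⟩, hRY, hQY⟩ := hY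
      rw [Finset.mem_powersetCard]
      constructor
      · intro x hx
        simp only [Finset.mem_sdiff, Finset.mem_union, Finset.mem_univ, true_and]
        simp only [Finset.mem_sdiff] at hx
        rintro (hxQ | hxR)
        · exact (Finset.disjoint_left.mp hQY) hxQ hx.1
        · exact hx.2 hxR
      · rw [Finset.card_sdiff_of_subset hRY, hYcard]
    · intro Z hZ
      rw [Finset.mem_powersetCard] at hZ
      obtain ⟨hZsub, hZcard⟩ := hZ
      have hZR : Disjoint Z R := by
        apply Finset.disjoint_left.mpr
        intro x hxZ hxR
        have := hZsub hxZ
        simp only [Finset.mem_sdiff, Finset.mem_union] at this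
        exact this.2 (Or.inr hxR)
      have hZQ : Disjoint Q Z := by
        apply Finset.disjoint_left.mpr
        intro x hxQ hxZ
        have := hZsub hxZ
        simp only [Finset.mem_sdiff, Finset.mem_union] at this
        exact this.2 (Or.inl hxQ)
      simp only [mem_filter, Finset.mem_powersetCard]
      refine ⟨⟨Finset.subset_univ _, ?_⟩, Finset.subset_union_right, ?_⟩
      · rw [Finset.card_union_of_disjoint hZR, hZcard]
        omega
      · rw [Finset.disjoint_union_right]
        exact ⟨hZQ, hdisj⟩
    · intro Y hY
      simp only [mem_filter, Finset.mem_powersetCard] at hY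
      exact Finset.sdiff_union_of_subset hY.2.1
    · intro Z hZ
      rw [Finset.mem_powersetCard] at hZ
      apply Finset.union_sdiff_cancel_right
      apply Finset.disjoint_left.mpr
      intro x hxZ hxR
      have := hZ.1 hxZ
      simp only [Finset.mem_sdiff, Finset.mem_union] at this
      exact this.2 (Or.inr hxR)
  have hcardsd : (Finset.univ \ (Q ∪ R)).card = n - R.card - Q.card := by
    rw [Finset.card_sdiff_of_subset (Finset.subset_univ _), Finset.card_union_of_disjoint hdisj,
      Finset.card_univ, Fintype.card_fin]
    omega
  have key2 : ((Finset.univ.powersetCard q).filter (fun Y => R ⊆ Y ∧ Disjoint Q Y)).card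
      = Nat.choose (n - R.card - Q.card) (q - R.card) := by
    rw [key, Finset.card_powersetCard, hcardsd]
  refine ⟨key2, ?_⟩
  rw [key2, Nat.odd_iff]
  constructor
  · intro hodd
    by_contra hQne
    have hQpos : 1 ≤ Q.card := Finset.card_pos.mpr (Finset.nonempty_iff_ne_empty.mpr hQne)
    have heq : n - R.card - Q.card = (q - R.card) + (2 ^ (i - 1) - Q.card) := by omega
    rw [heq, choose_mod_two_even (i - 1) (q - R.card) (2 ^ (i - 1) - Q.card)
      (by omega) (by omega) (by omega)] at hodd
    omega
  · intro hQ
    subst hQ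
    simp only [Finset.card_empty, Nat.sub_zero]
    have heq : n - R.card = 2 ^ (i - 1) + (q - R.card) := by omega
    rw [heq]
    exact choose_mod_two_odd (i - 1) (q - R.card) (by omega)
end

section
/- Let G be a graph with vertex cover X, let c ∈ ℕ, let D ⊆ V(G) \ X, and let v ∈ V(G) \ (D ∪ X). Suppose the c-incidence vector of v with respect to (G, X) equals the 𝔽₂-sum over u ∈ D of the c-incidence vectors of u. Then for any induced subgraph H of G containing D and v, the c-incidence vector of v with respect to (H, X ∩ V(H)) equals the 𝔽₂-sum over u ∈ D of the c-incidence vectors of u with respect to (H, X ∩ V(H)). -/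
open Finset

/-- `X` is a vertex cover of `G`: every edge has an endpoint in `X`. -/
def IsVertexCover {V : Type*} (G : SimpleGraph V) (X : Finset V) : Prop :=
  ∀ ⦃a b : V⦄, G.Adj a b → a ∈ X ∨ b ∈ X

open scoped Classical in
/-- The `(Q,R)`-entry of the incidence vector of `u` over `𝔽₂`: it is `1` iff
`u` has no neighbor in `Q` and all of `R` among its neighbors. -/
noncomputable def incVec {V : Type*} (G : SimpleGraph V) (u : V) (Q R : Finset V) : ZMod 2 :=
  if (∀ x ∈ Q, ¬ G.Adj u x) ∧ (∀ x ∈ R, G.Adj u x) then 1 else 0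

theorem stmt5 {V : Type*} (G : SimpleGraph V) (X : Finset V) (hX : IsVertexCover G X)
    (c : ℕ) (D : Finset V) (hD : ∀ u ∈ D, u ∉ X)
    (v : V) (hvD : v ∉ D) (hvX : v ∉ X)
    (hsum : ∀ Q R : Finset V, Q ⊆ X → R ⊆ X → Disjoint Q R → Q.card + R.card ≤ c →
      incVec G v Q R = ∑ u ∈ D, incVec G u Q R)
    (W : Set V) (hDW : ∀ u ∈ D, u ∈ W) (hvW : v ∈ W) :
    ∀ Q R : Finset W, (∀ x ∈ Q, (x : V) ∈ X) → (∀ x ∈ R, (x : V) ∈ X) →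
      Disjoint Q R → Q.card + R.card ≤ c →
      incVec (G.induce W) ⟨v, hvW⟩ Q R
        = ∑ u ∈ D.attach, incVec (G.induce W) ⟨u.1, hDW u.1 u.2⟩ Q R := by
  classical
  intro Q R hQ hR hdisj hcard
  have key : ∀ (a : V) (ha : a ∈ W),
      incVec (G.induce W) ⟨a, ha⟩ Q R
        = incVec G a (Q.image Subtype.val) (R.image Subtype.val) := by
    intro a ha
    have hiff : ((∀ x ∈ Q, ¬ (G.induce W).Adj ⟨a, ha⟩ x) ∧
        (∀ x ∈ R, (G.induce W).Adj ⟨a, ha⟩ x))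
        ↔ ((∀ x ∈ Q.image Subtype.val, ¬ G.Adj a x) ∧
        (∀ x ∈ R.image Subtype.val, G.Adj a x)) := by
      simp [SimpleGraph.comap_adj]
    simp only [incVec]
    exact if_congr hiff rfl rfl
  rw [key v hvW]
  have h2 : ∑ u ∈ D.attach, incVec (G.induce W) ⟨u.1, hDW u.1 u.2⟩ Q R
      = ∑ u ∈ D, incVec G u (Q.image Subtype.val) (R.image Subtype.val) := by
    rw [← Finset.sum_attach D (fun u => incVec G u (Q.image Subtype.val) (R.image Subtype.val))]
    exact Finset.sum_congr rfl fun u _ => key u.1 (hDW u.1 u.2)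
  rw [h2]
  apply hsum
  · intro x hx
    obtain ⟨y, hy, rfl⟩ := Finset.mem_image.mp hx
    exact hQ y hy
  · intro x hx
    obtain ⟨y, hy, rfl⟩ := Finset.mem_image.mp hx
    exact hR y hy
  · exact (Finset.disjoint_image Subtype.val_injective).mpr hdisj
  · rwa [Finset.card_image_of_injective _ Subtype.val_injective,
      Finset.card_image_of_injective _ Subtype.val_injective]
end

section
/- Let G be a graph with vertex cover X, let c ∈ ℕ, let D ⊆ V(G) be disjoint from X, and let v ∈ V(G) \ (D ∪ X) satisfy that the c-incidence vector of v equals the 𝔽₂-sum of the c-incidence vectors of the vertices of D. Then for any set S ⊆ V(G) with |S| ≤ c, there exists a subset D' ⊆ D of odd (hence nonzero) cardinality such that every vertex u ∈ D' satisfies N_G(u) ∩ S = N_G(v) ∩ S. -/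
open Finset

theorem stmt6 {V : Type*} (G : SimpleGraph V) (X : Finset V) (hX : IsVertexCover G X)
    (c : ℕ) (D : Finset V) (hD : ∀ u ∈ D, u ∉ X)
    (v : V) (hvD : v ∉ D) (hvX : v ∉ X)
    (hsum : ∀ Q R : Finset V, Q ⊆ X → R ⊆ X → Disjoint Q R → Q.card + R.card ≤ c →
      incVec G v Q R = ∑ u ∈ D, incVec G u Q R) :
    ∀ S : Finset V, S.card ≤ c →
      ∃ D' ⊆ D, Odd D'.card ∧
        ∀ u ∈ D', ∀ s ∈ S, (G.Adj u s ↔ G.Adj v s) := by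
  classical
  intro S hS
  set Q : Finset V := X.filter (fun x => x ∈ S ∧ ¬ G.Adj v x) with hQdef
  set R : Finset V := X.filter (fun x => x ∈ S ∧ G.Adj v x) with hRdef
  have hQX : Q ⊆ X := filter_subset _ _
  have hRX : R ⊆ X := filter_subset _ _
  have hdisj : Disjoint Q R := by
    rw [disjoint_left]
    intro a haQ haR
    simp only [hQdef, hRdef, mem_filter] at haQ haR
    exact haQ.2.2 haR.2.2
  have hcard : Q.card + R.card ≤ c := by
    rw [← card_union_of_disjoint hdisj]
    refine le_trans (card_le_card ?_) hS
    intro a ha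
    rcases mem_union.1 ha with h | h
    · exact (mem_filter.1 h).2.1
    · exact (mem_filter.1 h).2.1
  have hv1 : incVec G v Q R = 1 := by
    rw [incVec, if_pos]
    constructor
    · intro x hx; exact (mem_filter.1 hx).2.2
    · intro x hx; exact (mem_filter.1 hx).2.2
  have hsum' := hsum Q R hQX hRX hdisj hcard
  rw [hv1] at hsum'
  set P : V → Prop := fun u => (∀ x ∈ Q, ¬ G.Adj u x) ∧ (∀ x ∈ R, G.Adj u x) with hP
  have hsum2 : ((D.filter P).card : ZMod 2) = 1 := by
    rw [hsum', Finset.card_filter]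
    push_cast
    refine Finset.sum_congr rfl fun u _ => ?_
    by_cases h : (∀ x ∈ Q, ¬ G.Adj u x) ∧ (∀ x ∈ R, G.Adj u x)
    · rw [if_pos h, incVec, if_pos h]
    · rw [if_neg h, incVec, if_neg h]
  refine ⟨D.filter P, filter_subset _ _, ?_, ?_⟩
  · rcases Nat.even_or_odd (D.filter P).card with he | ho
    · exfalso
      have : ((D.filter P).card : ZMod 2) = 0 := by
        rw [(ZMod.natCast_eq_zero_iff _ 2)]
        exact he.two_dvd
      rw [this] at hsum2
      exact absurd hsum2 (by decide)
    · exact ho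
  · intro u hu s hs
    have huD := (mem_filter.1 hu).1
    have hPu : P u := (mem_filter.1 hu).2
    have huX := hD u huD
    by_cases hsX : s ∈ X
    · by_cases hadj : G.Adj v s
      · have hsR : s ∈ R := mem_filter.2 ⟨hsX, hs, hadj⟩
        exact ⟨fun _ => hadj, fun _ => hPu.2 s hsR⟩
      · have hsQ : s ∈ Q := mem_filter.2 ⟨hsX, hs, hadj⟩
        exact ⟨fun h => absurd h (hPu.1 s hsQ), fun h => absurd h hadj⟩
    · constructor
      · intro h
        rcases hX h with h' | h'
        · exact absurd h' huX
        · exact absurd h' hsX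
      · intro h
        rcases hX h with h' | h'
        · exact absurd h' hvX
        · exact absurd h' hsX
end

section
/- Let Π be a graph property characterized by c adjacencies. Then Π is characterized by rank-c adjacencies with singleton replacements: for every graph H, vertex cover X of H, set D ⊆ V(H) \ X, and vertex v ∈ V(H) \ (D ∪ X), if H − D ∈ Π and the c-incidence vector of v equals the 𝔽₂-sum of the c-incidence vectors of the vertices of D, then there exists v' ∈ D with H − v − (D \ {v'}) ∈ Π. -/
open Finset

/-- A graph property: a class of (finite or infinite) graphs,
given as a predicate on graphs over every vertex type. -/
def GraphProp : Type 1 :=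
  ∀ (V : Type), SimpleGraph V → Prop

/-- A graph property is closed under isomorphism. -/
def IsoClosed (P : GraphProp) : Prop :=
  ∀ (V W : Type) (G : SimpleGraph V) (H : SimpleGraph W), G ≃g H → P V G → P W H

/-- `P` is characterized by `c` adjacencies: for every `G ∈ P` and vertex `v`
there is a set `B` of at most `c` other vertices such that any graph obtained
from `G` by adding/removing edges between `v` and vertices outside `B`
is also in `P`. -/
def CharAdj (P : GraphProp) (c : ℕ) : Prop :=
  ∀ (V : Type) (G : SimpleGraph V), P V G → ∀ v : V,
    ∃ B : Finset V, v ∉ B ∧ B.card ≤ c ∧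
      ∀ G' : SimpleGraph V,
        (∀ w ∈ B, (G'.Adj v w ↔ G.Adj v w)) →
        (∀ a b : V, a ≠ v → b ≠ v → (G'.Adj a b ↔ G.Adj a b)) →
        P V G'

/-- `P` is characterized by rank-`c` adjacencies. -/
def CharRank (P : GraphProp) (c : ℕ) : Prop :=
  ∀ (V : Type) (G : SimpleGraph V) (X D : Finset V) (v : V),
    IsVertexCover G X → (∀ u ∈ D, u ∉ X) → v ∉ D → v ∉ X →
    P {x : V // x ∉ D} (G.induce {x : V | x ∉ D}) →
    (∀ Q R : Finset V, Q ⊆ X → R ⊆ X → Disjoint Q R → Q.card + R.card ≤ c →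
      incVec G v Q R = ∑ u ∈ D, incVec G u Q R) →
    ∃ D' : Finset V, D' ⊆ D ∧
      P {x : V // x ≠ v ∧ (x ∉ D ∨ x ∈ D')}
        (G.induce {x : V | x ≠ v ∧ (x ∉ D ∨ x ∈ D')})

/-- `P` is characterized by rank-`c` adjacencies with singleton replacements. -/
def CharRankSingleton (P : GraphProp) (c : ℕ) : Prop :=
  ∀ (V : Type) (G : SimpleGraph V) (X D : Finset V) (v : V),
    IsVertexCover G X → (∀ u ∈ D, u ∉ X) → v ∉ D → v ∉ X →
    P {x : V // x ∉ D} (G.induce {x : V | x ∉ D}) →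
    (∀ Q R : Finset V, Q ⊆ X → R ⊆ X → Disjoint Q R → Q.card + R.card ≤ c →
      incVec G v Q R = ∑ u ∈ D, incVec G u Q R) →
    ∃ v' ∈ D,
      P {x : V // x ≠ v ∧ (x ∉ D ∨ x = v')}
        (G.induce {x : V | x ≠ v ∧ (x ∉ D ∨ x = v')})

theorem stmt7 (P : GraphProp) (hiso : IsoClosed P) (c : ℕ) (h : CharAdj P c) :
    CharRankSingleton P c := by
  classical
  intro V G X D v hX hDX hvD hvX hP hinc
  obtain ⟨B, hvB, hBcard, hB⟩ := h _ _ hP ⟨v, hvD⟩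
  set Bx : Finset V := (B.image Subtype.val) ∩ X with hBxdef
  set Q : Finset V := Bx.filter (fun x => ¬ G.Adj v x) with hQdef
  set R : Finset V := Bx.filter (fun x => G.Adj v x) with hRdef
  have hBxX : Bx ⊆ X := inter_subset_right
  have hQX : Q ⊆ X := (filter_subset _ _).trans hBxX
  have hRX : R ⊆ X := (filter_subset _ _).trans hBxX
  have hQR : Disjoint Q R := by
    rw [Finset.disjoint_left]
    intro a haQ haR
    exact (mem_filter.1 haQ).2 (mem_filter.1 haR).2
  have hcard : Q.card + R.card ≤ c := by
    have h1 : R.card + Q.card = Bx.card :=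
      Finset.card_filter_add_card_filter_not (s := Bx) (p := fun x => G.Adj v x)
    have h2 : Bx.card ≤ B.card :=
      le_trans (card_le_card inter_subset_left) Finset.card_image_le
    omega
  have hv1 : incVec G v Q R = 1 := by
    unfold incVec
    rw [if_pos]
    exact ⟨fun x hx => (mem_filter.1 hx).2, fun x hx => (mem_filter.1 hx).2⟩
  have hsum : (∑ u ∈ D, incVec G u Q R) = 1 := by
    rw [← hinc Q R hQX hRX hQR hcard, hv1]
  have hex : ∃ u ∈ D, incVec G u Q R = 1 := by
    by_contra hcon
    push_neg at hcon
    have hz : ∀ u ∈ D, incVec G u Q R = 0 := by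
      intro u hu
      have := hcon u hu
      unfold incVec at this ⊢
      split <;> simp_all
    rw [Finset.sum_congr rfl hz, Finset.sum_const_zero] at hsum
    exact one_ne_zero hsum.symm
  obtain ⟨v', hv'D, hv'1⟩ := hex
  have hv'cond : (∀ x ∈ Q, ¬ G.Adj v' x) ∧ (∀ x ∈ R, G.Adj v' x) := by
    by_contra hc
    unfold incVec at hv'1
    rw [if_neg hc] at hv'1
    exact one_ne_zero hv'1.symm
  have hv'X : v' ∉ X := hDX v' hv'D
  have hagree : ∀ w : {x : V // x ∉ D}, w ∈ B → (G.Adj v' w.val ↔ G.Adj v w.val) := by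
    intro w hwB
    by_cases hwX : w.val ∈ X
    · have hwBx : w.val ∈ Bx := mem_inter.2 ⟨mem_image.2 ⟨w, hwB, rfl⟩, hwX⟩
      by_cases ha : G.Adj v w.val
      · have hmem : w.val ∈ R := mem_filter.2 ⟨hwBx, ha⟩
        simp [ha, hv'cond.2 _ hmem]
      · have hmem : w.val ∈ Q := mem_filter.2 ⟨hwBx, ha⟩
        simp [ha, hv'cond.1 _ hmem]
    · constructor
      · intro hadj
        exact absurd ((hX hadj).resolve_left hv'X) hwX
      · intro hadj
        exact absurd ((hX hadj).resolve_left hvX) hwX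
  have hv'v : v' ≠ v := fun heq => hvD (heq ▸ hv'D)
  refine ⟨v', hv'D, ?_⟩
  set S : Set V := {x : V | x ≠ v ∧ (x ∉ D ∨ x = v')} with hSdef
  have hv'S : v' ∈ S := ⟨hv'v, Or.inr rfl⟩
  have hne : ∀ a : {x : V // x ∉ D}, a.val ≠ v' := fun a heq => a.prop (heq ▸ hv'D)
  let e : {x : V // x ∉ D} ≃ {x : V // x ∈ S} :=
    { toFun := fun a => if hav : a.val = v then ⟨v', hv'S⟩
        else ⟨a.val, ⟨hav, Or.inl a.prop⟩⟩
      invFun := fun b => if hbv : b.val = v' then ⟨v, hvD⟩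
        else ⟨b.val, b.prop.2.resolve_right hbv⟩
      left_inv := by
        intro a
        dsimp only
        by_cases hav : a.val = v
        · rw [dif_pos hav,
            dif_pos (show Subtype.val (⟨v', hv'S⟩ : {x : V // x ∈ S}) = v' from rfl)]
          exact Subtype.ext hav.symm
        · rw [dif_neg hav,
            dif_neg (show ¬ Subtype.val
              (⟨a.val, ⟨hav, Or.inl a.prop⟩⟩ : {x : V // x ∈ S}) = v' from hne a)]
      right_inv := by
        intro b
        dsimp only
        by_cases hbv : b.val = v'
        · rw [dif_pos hbv,
            dif_pos (show Subtype.val (⟨v, hvD⟩ : {x : V // x ∉ D}) = v from rfl)]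
          exact Subtype.ext hbv.symm
        · rw [dif_neg hbv,
            dif_neg (show ¬ Subtype.val
              (⟨b.val, b.prop.2.resolve_right hbv⟩ : {x : V // x ∉ D}) = v from b.prop.1)] }
  let G' : SimpleGraph {x : V // x ∉ D} := (G.induce S).comap (fun a => e a)
  have hea : ∀ a : {x : V // x ∉ D}, a.val ≠ v → Subtype.val (e a) = a.val := by
    intro a hav
    show Subtype.val (if hav : a.val = v then (⟨v', hv'S⟩ : {x : V // x ∈ S})
        else ⟨a.val, ⟨hav, Or.inl a.prop⟩⟩) = a.val
    rw [dif_neg hav]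
  have hev : Subtype.val (e ⟨v, hvD⟩) = v' := by
    show Subtype.val (if hav : v = v then (⟨v', hv'S⟩ : {x : V // x ∈ S})
        else ⟨v, ⟨hav, Or.inl hvD⟩⟩) = v'
    rw [dif_pos rfl]
  have hPG' : P _ G' := by
    refine hB G' ?_ ?_
    · intro w hwB
      have hwv : w.val ≠ v := by
        intro heq
        exact hvB (by rwa [show w = ⟨v, hvD⟩ from Subtype.ext heq] at hwB)
      show G.Adj (Subtype.val (e ⟨v, hvD⟩)) (Subtype.val (e w)) ↔ G.Adj v w.val
      rw [hev, hea w hwv]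
      exact hagree w hwB
    · intro a b hav hbv
      have hav' : a.val ≠ v := fun heq => hav (Subtype.ext heq)
      have hbv' : b.val ≠ v := fun heq => hbv (Subtype.ext heq)
      show G.Adj (Subtype.val (e a)) (Subtype.val (e b)) ↔ G.Adj a.val b.val
      rw [hea a hav', hea b hbv']
  have iso : G' ≃g (G.induce S) := { toEquiv := e, map_rel_iff' := Iff.rfl }
  exact hiso _ _ G' (G.induce S) iso hPG'
end

section
/- Let Π and Π' be graph properties characterized by rank-c_Π and rank-c_{Π'} adjacencies respectively. Then the union Π ∪ Π' is characterized by rank-max(c_Π, c_{Π'}) adjacencies. -/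
open Finset

theorem stmt8 (P P' : GraphProp) (c c' : ℕ)
    (h : CharRank P c) (h' : CharRank P' c') :
    CharRank (fun V G => P V G ∨ P' V G) (max c c') := by
  intro V G X D v hX hD hvD hvX hP hvec
  rcases hP with hP | hP
  · obtain ⟨D', hD', hres⟩ := h V G X D v hX hD hvD hvX hP
      (fun Q R hQ hR hdisj hcard =>
        hvec Q R hQ hR hdisj (hcard.trans (le_max_left c c')))
    exact ⟨D', hD', Or.inl hres⟩
  · obtain ⟨D', hD', hres⟩ := h' V G X D v hX hD hvD hvX hP
      (fun Q R hQ hR hdisj hcard =>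
        hvec Q R hQ hR hdisj (hcard.trans (le_max_right c c')))
    exact ⟨D', hD', Or.inr hres⟩
end

section
/- Let G be the graph consisting of an induced cycle (v_1, ..., v_n) with n = 2^i − 1 (i chosen so that q = 2^{i-1} − 1 > c), a vertex v adjacent to all v_j, and an independent set D containing, for each q-element subset Y of [n], a vertex d_Y adjacent exactly to {v_j : j ∈ Y}. Then for every pair of disjoint subsets Q, R of X = {v_1,...,v_n} with |Q| + |R| ≤ c, the 𝔽₂-sum over u ∈ D of the (Q,R)-entries of their c-incidence vectors equals the (Q,R)-entry of the c-incidence vector of v. In other words, inc^c_{(G,X)}(v) = ∑_{u ∈ D} inc^c_{(G,X)}(u) over 𝔽₂. -/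
open Finset

lemma lucas_step (m k : ℕ) : ((m.choose k : ZMod 2)) =
    (((m % 2).choose (k % 2) : ℕ) : ZMod 2) * (((m / 2).choose (k / 2) : ℕ) : ZMod 2) := by
  haveI : Fact (Nat.Prime 2) := ⟨Nat.prime_two⟩
  have h := @Choose.choose_modEq_choose_mod_mul_choose_div_nat m k 2 _
  rw [← Nat.cast_mul, ZMod.natCast_eq_natCast_iff]
  exact h

lemma keyB : ∀ t r k : ℕ, r < 2 ^ t → k < 2 ^ t →
    ((2 ^ t + r).choose k : ZMod 2) = (r.choose k : ZMod 2) := by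
  intro t
  induction t with
  | zero => intro r k hr hk; interval_cases r; interval_cases k; simp
  | succ t ih =>
    intro r k hr hk
    rw [lucas_step (2 ^ (t + 1) + r) k, lucas_step r k]
    have h1 : (2 ^ (t + 1) + r) % 2 = r % 2 := by omega
    have h2 : (2 ^ (t + 1) + r) / 2 = 2 ^ t + r / 2 := by
      have : 2 ^ (t + 1) = 2 * 2 ^ t := by ring
      omega
    rw [h1, h2, ih (r / 2) (k / 2) (by omega) (by omega)]

lemma parity (t a b : ℕ) (h : a + b < 2 ^ t - 1) :
    (((2 ^ (t + 1) - 1 - a - b).choose (2 ^ t - 1 - b) : ℕ) : ZMod 2)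
      = if a = 0 then 1 else 0 := by
  have hP : 2 ^ (t + 1) = 2 * 2 ^ t := by ring
  have hm : 2 ^ (t + 1) - 1 - a - b = 2 ^ t + (2 ^ t - 1 - a - b) := by omega
  rw [hm, keyB t _ _ (by omega) (by omega)]
  rcases Nat.eq_zero_or_pos a with ha | ha
  · subst ha; simp
  · rw [if_neg (by omega), Nat.choose_eq_zero_of_lt (by omega), Nat.cast_zero]

theorem stmt17 (c i : ℕ) (hi : 1 ≤ i) (n q : ℕ)
    (hn : n = 2 ^ i - 1) (hq : q = 2 ^ (i - 1) - 1) (hcq : c < q)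
    (G : SimpleGraph (Sum (Fin n) (Option {Y : Finset (Fin n) // Y.card = q})))
    (hcyc : ∀ i j : Fin n, G.Adj (Sum.inl i) (Sum.inl j) ↔
      ((i.val + 1) % n = j.val ∨ (j.val + 1) % n = i.val))
    (hv : ∀ j : Fin n, G.Adj (Sum.inr none) (Sum.inl j))
    (hD : ∀ (Y : {Y : Finset (Fin n) // Y.card = q}) (j : Fin n),
      G.Adj (Sum.inr (some Y)) (Sum.inl j) ↔ j ∈ Y.1)
    (hindep : ∀ a b : Option {Y : Finset (Fin n) // Y.card = q},
      ¬ G.Adj (Sum.inr a) (Sum.inr b)) :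
    ∀ Q R : Finset (Fin n), Disjoint Q R → Q.card + R.card ≤ c →
      incVec G (Sum.inr none) (Q.image Sum.inl) (R.image Sum.inl)
        = ∑ Y : {Y : Finset (Fin n) // Y.card = q},
            incVec G (Sum.inr (some Y)) (Q.image Sum.inl) (R.image Sum.inl) := by
  intro Q R hdisj hcard
  classical
  -- LHS
  have hL : incVec G (Sum.inr none) (Q.image Sum.inl) (R.image Sum.inl)
      = if Q = ∅ then 1 else 0 := by
    by_cases hQ : Q = ∅
    · subst hQ
      rw [if_pos rfl, incVec, if_pos]
      refine ⟨by simp, fun x hx => ?_⟩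
      obtain ⟨j, _, rfl⟩ := Finset.mem_image.mp hx
      exact hv j
    · rw [if_neg hQ, incVec, if_neg]
      rintro ⟨h1, _⟩
      obtain ⟨j, hj⟩ := Finset.nonempty_iff_ne_empty.mpr hQ
      exact h1 _ (Finset.mem_image_of_mem _ hj) (hv j)
  -- RHS terms
  have hequiv : ∀ Y : {Y : Finset (Fin n) // Y.card = q},
      ((∀ x ∈ Q.image Sum.inl, ¬ G.Adj (Sum.inr (some Y)) x) ∧
        (∀ x ∈ R.image Sum.inl, G.Adj (Sum.inr (some Y)) x)) ↔
      (Disjoint Y.1 Q ∧ R ⊆ Y.1) := by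
    intro Y
    constructor
    · rintro ⟨h1, h2⟩
      refine ⟨Finset.disjoint_right.mpr fun {j} hj hjY =>
        h1 _ (Finset.mem_image_of_mem _ hj) ((hD Y j).mpr hjY), fun j hj =>
        (hD Y j).mp (h2 _ (Finset.mem_image_of_mem _ hj))⟩
    · rintro ⟨h1, h2⟩
      constructor
      · intro x hx hadj
        obtain ⟨j, hj, rfl⟩ := Finset.mem_image.mp hx
        exact (Finset.disjoint_right.mp h1 hj) ((hD Y j).mp hadj)
      · intro x hx
        obtain ⟨j, hj, rfl⟩ := Finset.mem_image.mp hx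
        exact (hD Y j).mpr (h2 hj)
  have hterm : ∀ Y : {Y : Finset (Fin n) // Y.card = q},
      incVec G (Sum.inr (some Y)) (Q.image Sum.inl) (R.image Sum.inl)
        = if (Disjoint Y.1 Q ∧ R ⊆ Y.1) then 1 else 0 := by
    intro Y
    by_cases h : Disjoint Y.1 Q ∧ R ⊆ Y.1
    · rw [if_pos h, incVec, if_pos ((hequiv Y).mpr h)]
    · rw [if_neg h, incVec, if_neg (fun hc => h ((hequiv Y).mp hc))]
  rw [hL, Finset.sum_congr rfl (fun Y _ => hterm Y), Finset.sum_boole]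
  -- count
  have hRQ : R ⊆ univ \ Q := fun x hx => Finset.mem_sdiff.mpr
    ⟨Finset.mem_univ x, fun hxQ => Finset.disjoint_left.mp hdisj hxQ hx⟩
  set S := (univ \ Q) \ R with hSdef
  have hScard : S.card = n - Q.card - R.card := by
    rw [hSdef, card_sdiff_of_subset hRQ, card_sdiff_of_subset (subset_univ Q), card_univ, Fintype.card_fin]
  have hRq : R.card ≤ q := le_of_lt (lt_of_le_of_lt (by omega) hcq)
  have hbij : (univ.filter
        (fun Y : {Y : Finset (Fin n) // Y.card = q} => Disjoint Y.1 Q ∧ R ⊆ Y.1)).card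
      = (powersetCard (q - R.card) S).card := by
    apply Finset.card_bij (fun Y _ => Y.1 \ R)
    · intro Y hY
      obtain ⟨hYQ, hRY⟩ := (Finset.mem_filter.mp hY).2
      rw [Finset.mem_powersetCard]
      constructor
      · intro x hx
        obtain ⟨hxY, hxR⟩ := Finset.mem_sdiff.mp hx
        exact Finset.mem_sdiff.mpr ⟨Finset.mem_sdiff.mpr ⟨Finset.mem_univ x,
          fun hxQ => Finset.disjoint_right.mp hYQ hxQ hxY⟩, hxR⟩
      · rw [Finset.card_sdiff_of_subset hRY, Y.2]
    · intro Y1 h1 Y2 h2 heq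
      have hR1 : R ⊆ Y1.1 := (Finset.mem_filter.mp h1).2.2
      have hR2 : R ⊆ Y2.1 := (Finset.mem_filter.mp h2).2.2
      apply Subtype.ext
      rw [← Finset.sdiff_union_of_subset hR1, ← Finset.sdiff_union_of_subset hR2, heq]
    · intro Z hZ
      obtain ⟨hZS, hZc⟩ := Finset.mem_powersetCard.mp hZ
      have hd : Disjoint Z R := Finset.disjoint_of_subset_left hZS sdiff_disjoint
      have hcardZR : (Z ∪ R).card = q := by
        rw [Finset.card_union_of_disjoint hd, hZc]; omega
      refine ⟨⟨Z ∪ R, hcardZR⟩, ?_, ?_⟩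
      · rw [Finset.mem_filter]
        refine ⟨Finset.mem_univ _, ?_, Finset.subset_union_right⟩
        rw [Finset.disjoint_left]
        intro x hx hxQ
        rcases Finset.mem_union.mp hx with h | h
        · exact (Finset.mem_sdiff.mp (Finset.mem_sdiff.mp (hZS h)).1).2 hxQ
        · exact Finset.disjoint_left.mp hdisj hxQ h
      · show (Z ∪ R) \ R = Z
        rw [Finset.union_sdiff_right, Finset.sdiff_eq_self_of_disjoint hd]
  rw [hbij, Finset.card_powersetCard, hScard]
  have hab : Q.card + R.card < 2 ^ (i - 1) - 1 := by omega
  have key := parity (i - 1) Q.card R.card hab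
  rw [show i - 1 + 1 = i from by omega] at key
  rw [← hn, ← hq] at key
  rw [key]
  simp [Finset.card_eq_zero]
end
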